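/- arXiv:1012.2630 — 3 statements merged into one kernel-verified Lean document; each statement's English description precedes it below -/
import Mathlib

section
/- Let M : Matrix (Fin m) (Fin n) ℝ and let r be a natural number. Suppose M i j = ∑_{k : Fin r} w k i * w' k j = ∑_{k : Fin r} u k i * u' k j, where w, u : Fin r → (Fin m → ℝ) are each linearly independent families and w', u' : Fin r → (Fin n → ℝ) are each linearly independent families. Then there exist r×r real matrices B and B' with Bᵀ * B' = 1 (in particular both invertible) such that w k = ∑_{l} B k l • u l and w' k = ∑_{l} B' k l • u' l for all k. (Uniqueness of the decomposition of a state into decomposable terms, up to linear transformations B, B' with BᵀB' = 1.) -/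
/-!
Arrange each family as the matrix whose rows are its vectors; the hypothesis becomes
`Wᵀ W' = Uᵀ U'`, and linear independence of the rows gives each of `W, W', U, U'` a right
inverse. Multiplying on the right by a right inverse `X'` of `W'` gives `W = B U` with
`B = (U' X')ᵀ`; symmetrically `W' = B' U'`. Then `Uᵀ (Bᵀ B') U' = Uᵀ U'`, and cancelling `Uᵀ`
and `U'` with their one-sided inverses leaves `Bᵀ B' = 1`.
-/

namespace Matrix

variable {k m n R : Type*}

theorem exists_mul_eq_one_of_linearIndependent_row [Fintype k] [DecidableEq k] [Fintype m]
    [Field R] {A : Matrix k m R} (hA : LinearIndependent R A.row) :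
    ∃ X : Matrix m k R, A * X = 1 := by
  rw [← mulVec_surjective_iff_exists_right_inverse, ← coe_mulVecLin, ← LinearMap.range_eq_top]
  apply Submodule.eq_top_of_finrank_eq
  rw [← rank, hA.rank_matrix, Module.finrank_fintype_fun_eq_card]

theorem exists_eq_mul_of_transpose_mul_eq [Fintype k] [DecidableEq k] [Fintype n] [CommRing R]
    {W U : Matrix k m R} {W' U' : Matrix k n R} (hW' : ∃ X : Matrix n k R, W' * X = 1)
    (h : Wᵀ * W' = Uᵀ * U') : ∃ B : Matrix k k R, W = B * U := by
  obtain ⟨X, hX⟩ := hW'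
  have hWt : Wᵀ = Uᵀ * (U' * X) := by
    rw [← Matrix.mul_assoc, ← h, Matrix.mul_assoc, hX, Matrix.mul_one]
  refine ⟨(U' * X)ᵀ, ?_⟩
  rw [← transpose_transpose W, hWt, transpose_mul, transpose_transpose]

theorem exists_transpose_mul_eq_one_of_transpose_mul_eq [Fintype k] [DecidableEq k] [Fintype m]
    [Fintype n] [CommRing R] {W U : Matrix k m R} {W' U' : Matrix k n R}
    (hW : ∃ X : Matrix m k R, W * X = 1) (hW' : ∃ X : Matrix n k R, W' * X = 1)
    (hU : ∃ X : Matrix m k R, U * X = 1) (hU' : ∃ X : Matrix n k R, U' * X = 1)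
    (h : Wᵀ * W' = Uᵀ * U') :
    ∃ B B' : Matrix k k R, Bᵀ * B' = 1 ∧ W = B * U ∧ W' = B' * U' := by
  obtain ⟨B, hB⟩ := exists_eq_mul_of_transpose_mul_eq hW' h
  obtain ⟨B', hB'⟩ := exists_eq_mul_of_transpose_mul_eq (W := W') (U := U') hW (by
    simpa only [transpose_mul, transpose_transpose] using congrArg transpose h)
  refine ⟨B, B', ?_, hB, hB'⟩
  obtain ⟨S, hS⟩ := hU
  obtain ⟨S', hS'⟩ := hU'
  calc Bᵀ * B' = (U * S)ᵀ * (Bᵀ * B') * (U' * S') := by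
        rw [hS, hS', transpose_one, Matrix.one_mul, Matrix.mul_one]
    _ = Sᵀ * ((B * U)ᵀ * (B' * U')) * S' := by
        simp only [transpose_mul, Matrix.mul_assoc]
    _ = (U * S)ᵀ * (U' * S') := by
        rw [← hB, ← hB', h, transpose_mul]
        simp only [Matrix.mul_assoc]
    _ = 1 := by rw [hS, hS', transpose_one, Matrix.one_mul]

end Matrix

/-- **Uniqueness of the decomposition into decomposable terms.**
If a matrix `M` admits two decompositions `M i j = ∑ k, w k i * w' k j
= ∑ k, u k i * u' k j` into `r` terms with linearly independent families
`w, u` (on the left) and `w', u'` (on the right), then the two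
decompositions are related by matrices `B, B'` with `Bᵀ * B' = 1`. -/
theorem decomposition_unique (m n r : ℕ) (M : Matrix (Fin m) (Fin n) ℝ)
    (w u : Fin r → (Fin m → ℝ)) (w' u' : Fin r → (Fin n → ℝ))
    (hw : LinearIndependent ℝ w) (hw' : LinearIndependent ℝ w')
    (hu : LinearIndependent ℝ u) (hu' : LinearIndependent ℝ u')
    (hM : ∀ i j, M i j = ∑ k : Fin r, w k i * w' k j)
    (hM' : ∀ i j, M i j = ∑ k : Fin r, u k i * u' k j) :
    ∃ B B' : Matrix (Fin r) (Fin r) ℝ,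
      B.transpose * B' = 1 ∧
      (∀ k, w k = ∑ l : Fin r, B k l • u l) ∧
      (∀ k, w' k = ∑ l : Fin r, B' k l • u' l) := by
  have hdecomp :
      (Matrix.of w).transpose * Matrix.of w' = (Matrix.of u).transpose * Matrix.of u' := by
    ext i j
    simp only [Matrix.mul_apply, Matrix.transpose_apply, Matrix.of_apply, ← hM, ← hM']
  obtain ⟨B, B', hBB', hB, hB'⟩ := Matrix.exists_transpose_mul_eq_one_of_transpose_mul_eq
    (Matrix.exists_mul_eq_one_of_linearIndependent_row hw)
    (Matrix.exists_mul_eq_one_of_linearIndependent_row hw')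
    (Matrix.exists_mul_eq_one_of_linearIndependent_row hu)
    (Matrix.exists_mul_eq_one_of_linearIndependent_row hu') hdecomp
  exact ⟨B, B', hBB', fun k => (congrFun hB k).trans (Matrix.vecMul_eq_sum _ _),
    fun k => (congrFun hB' k).trans (Matrix.vecMul_eq_sum _ _)⟩
end

section
/- For every three-qubit array v : Fin 2 → Fin 2 → Fin 2 → ℝ and all invertible 2×2 real matrices g₁, g₂, g₃, the invariant tuple is unchanged under the action: N(g·v) = N(v), i.e. n₁(g·v) = n₁(v), n₂(g·v) = n₂(v), n₃(g·v) = n₃(v), and ñ₄(g·v) = ñ₄(v). -/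
variable {d₁ d₂ d₃ : ℕ}

/-- Solution space `{w | ∀ j₂ j₃, ∑ j₁, v j₁ j₂ j₃ * w j₁ = 0}`. -/
def S₁ (v : Fin d₁ → Fin d₂ → Fin d₃ → ℝ) : Submodule ℝ (Fin d₁ → ℝ) where
  carrier := { w | ∀ j₂ j₃, ∑ j₁, v j₁ j₂ j₃ * w j₁ = 0 }
  zero_mem' := by intro j₂ j₃; simp
  add_mem' := by
    intro a b ha hb j₂ j₃
    simp only [Pi.add_apply, mul_add, Finset.sum_add_distrib]
    rw [ha j₂ j₃, hb j₂ j₃, add_zero]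
  smul_mem' := by
    intro c a ha j₂ j₃
    have hc : ∀ x y : ℝ, x * (c * y) = c * (x * y) := fun x y => mul_left_comm x c y
    simp only [Pi.smul_apply, smul_eq_mul, hc, ← Finset.mul_sum]
    rw [ha j₂ j₃, mul_zero]

/-- Solution space `{w | ∀ j₁ j₃, ∑ j₂, v j₁ j₂ j₃ * w j₂ = 0}`. -/
def S₂ (v : Fin d₁ → Fin d₂ → Fin d₃ → ℝ) : Submodule ℝ (Fin d₂ → ℝ) where
  carrier := { w | ∀ j₁ j₃, ∑ j₂, v j₁ j₂ j₃ * w j₂ = 0 }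
  zero_mem' := by intro j₁ j₃; simp
  add_mem' := by
    intro a b ha hb j₁ j₃
    simp only [Pi.add_apply, mul_add, Finset.sum_add_distrib]
    rw [ha j₁ j₃, hb j₁ j₃, add_zero]
  smul_mem' := by
    intro c a ha j₁ j₃
    have hc : ∀ x y : ℝ, x * (c * y) = c * (x * y) := fun x y => mul_left_comm x c y
    simp only [Pi.smul_apply, smul_eq_mul, hc, ← Finset.mul_sum]
    rw [ha j₁ j₃, mul_zero]

/-- Solution space `{w | ∀ j₁ j₂, ∑ j₃, v j₁ j₂ j₃ * w j₃ = 0}`. -/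
def S₃ (v : Fin d₁ → Fin d₂ → Fin d₃ → ℝ) : Submodule ℝ (Fin d₃ → ℝ) where
  carrier := { w | ∀ j₁ j₂, ∑ j₃, v j₁ j₂ j₃ * w j₃ = 0 }
  zero_mem' := by intro j₁ j₂; simp
  add_mem' := by
    intro a b ha hb j₁ j₂
    simp only [Pi.add_apply, mul_add, Finset.sum_add_distrib]
    rw [ha j₁ j₂, hb j₁ j₂, add_zero]
  smul_mem' := by
    intro c a ha j₁ j₂
    have hc : ∀ x y : ℝ, x * (c * y) = c * (x * y) := fun x y => mul_left_comm x c y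
    simp only [Pi.smul_apply, smul_eq_mul, hc, ← Finset.mul_sum]
    rw [ha j₁ j₂, mul_zero]

/-- Solution space of the three simultaneous pairwise contraction conditions
defining the intersection invariant `ñ₄`. -/
def S₄ (v : Fin d₁ → Fin d₂ → Fin d₃ → ℝ) :
    Submodule ℝ (Fin d₁ → Fin d₂ → Fin d₃ → ℝ) where
  carrier := { w |
    (∀ j₃ k₃, ∑ j₁, ∑ j₂, v j₁ j₂ j₃ * w j₁ j₂ k₃ = 0) ∧
    (∀ j₂ k₂, ∑ j₁, ∑ j₃, v j₁ j₂ j₃ * w j₁ k₂ j₃ = 0) ∧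
    (∀ j₁ k₁, ∑ j₂, ∑ j₃, v j₁ j₂ j₃ * w k₁ j₂ j₃ = 0) }
  zero_mem' := by
    refine ⟨?_, ?_, ?_⟩ <;> intro a b <;> simp
  add_mem' := by
    rintro a b ⟨ha1, ha2, ha3⟩ ⟨hb1, hb2, hb3⟩
    refine ⟨fun p q => ?_, fun p q => ?_, fun p q => ?_⟩ <;>
      simp only [Pi.add_apply, mul_add, Finset.sum_add_distrib]
    · rw [ha1 p q, hb1 p q, add_zero]
    · rw [ha2 p q, hb2 p q, add_zero]
    · rw [ha3 p q, hb3 p q, add_zero]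
  smul_mem' := by
    rintro c a ⟨ha1, ha2, ha3⟩
    have hc : ∀ x y : ℝ, x * (c * y) = c * (x * y) := fun x y => mul_left_comm x c y
    refine ⟨fun p q => ?_, fun p q => ?_, fun p q => ?_⟩ <;>
      simp only [Pi.smul_apply, smul_eq_mul, hc, ← Finset.mul_sum]
    · rw [ha1 p q, mul_zero]
    · rw [ha2 p q, mul_zero]
    · rw [ha3 p q, mul_zero]

/-- `n₁(v)`: the dimension of `S₁ v`. -/
noncomputable def n₁ (v : Fin d₁ → Fin d₂ → Fin d₃ → ℝ) : ℕ :=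
  Module.finrank ℝ (S₁ v)

/-- `n₂(v)`: the dimension of `S₂ v`. -/
noncomputable def n₂ (v : Fin d₁ → Fin d₂ → Fin d₃ → ℝ) : ℕ :=
  Module.finrank ℝ (S₂ v)

/-- `n₃(v)`: the dimension of `S₃ v`. -/
noncomputable def n₃ (v : Fin d₁ → Fin d₂ → Fin d₃ → ℝ) : ℕ :=
  Module.finrank ℝ (S₃ v)

/-- `ñ₄(v)`: the dimension of `S₄ v`. -/
noncomputable def n₄ (v : Fin d₁ → Fin d₂ → Fin d₃ → ℝ) : ℕ :=
  Module.finrank ℝ (S₄ v)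

/-- Action of a triple of matrices on a three-qubit coordinate array:
`(g·v) j₁ j₂ j₃ = ∑ k₁ k₂ k₃, v k₁ k₂ k₃ * g₁ k₁ j₁ * g₂ k₂ j₂ * g₃ k₃ j₃`. -/
def act (g₁ g₂ g₃ : Matrix (Fin 2) (Fin 2) ℝ) (v : Fin 2 → Fin 2 → Fin 2 → ℝ) :
    Fin 2 → Fin 2 → Fin 2 → ℝ :=
  fun j₁ j₂ j₃ => ∑ k₁, ∑ k₂, ∑ k₃, v k₁ k₂ k₃ * g₁ k₁ j₁ * g₂ k₂ j₂ * g₃ k₃ j₃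

/-!
Contracting `g·v` against `w` amounts to contracting `v` against `w` transformed by the `gᵢ`
on the contracted legs, followed by multiplication by invertible matrices on the free legs,
which does not affect vanishing. So each solution space of `g·v` is the preimage of the
corresponding one of `v` under a linear automorphism, and has the same dimension. For `ñ₄`
the free leg of `w` is transformed too: multiplying the leg-(1,2) contraction of `g·v`
against `w` on the right by `g₃ᵀ` turns it into `g₃ᵀ` times the contraction of `v` against
`(g₁ ⊗ g₂ ⊗ g₃) w`.
-/

open Matrix

lemma IsUnit.eq_zero_iff_of_mul_eq_mul {M₀ : Type*} [MonoidWithZero M₀] {a b x y : M₀}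
    (ha : IsUnit a) (hb : IsUnit b) (h : x * a = b * y) : x = 0 ↔ y = 0 := by
  rw [← ha.mul_left_eq_zero, h, hb.mul_right_eq_zero]

lemma Submodule.finrank_comap_of_bijective {R V W : Type*} [Ring R] [AddCommGroup V]
    [Module R V] [AddCommGroup W] [Module R W] {f : V →ₗ[R] W} (hf : Function.Bijective f)
    (p : Submodule R W) : Module.finrank R (p.comap f) = Module.finrank R p := by
  rw [show p.comap f = p.comap (LinearEquiv.ofBijective f hf : V →ₗ[R] W) from rfl,
    Submodule.comap_equiv_eq_map_symm, LinearEquiv.finrank_map_eq]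

lemma Matrix.mulVecLin_bijective {n K : Type*} [Fintype n] [DecidableEq n] [Field K]
    {A : Matrix n n K} (hA : IsUnit A) : Function.Bijective A.mulVecLin :=
  ⟨mulVec_injective_iff_isUnit.mpr hA, mulVec_surjective_iff_isUnit.mpr hA⟩

def contract₁ (v : Fin d₁ → Fin d₂ → Fin d₃ → ℝ) (u : Fin d₁ → ℝ) :
    Matrix (Fin d₂) (Fin d₃) ℝ :=
  .of fun j₂ j₃ => ∑ j₁, v j₁ j₂ j₃ * u j₁

def contract₂ (v : Fin d₁ → Fin d₂ → Fin d₃ → ℝ) (u : Fin d₂ → ℝ) :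
    Matrix (Fin d₁) (Fin d₃) ℝ :=
  .of fun j₁ j₃ => ∑ j₂, v j₁ j₂ j₃ * u j₂

def contract₃ (v : Fin d₁ → Fin d₂ → Fin d₃ → ℝ) (u : Fin d₃ → ℝ) :
    Matrix (Fin d₁) (Fin d₂) ℝ :=
  .of fun j₁ j₂ => ∑ j₃, v j₁ j₂ j₃ * u j₃

def contract₁₂ (v w : Fin d₁ → Fin d₂ → Fin d₃ → ℝ) : Matrix (Fin d₃) (Fin d₃) ℝ :=
  .of fun j₃ k₃ => ∑ j₁, ∑ j₂, v j₁ j₂ j₃ * w j₁ j₂ k₃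

def contract₁₃ (v w : Fin d₁ → Fin d₂ → Fin d₃ → ℝ) : Matrix (Fin d₂) (Fin d₂) ℝ :=
  .of fun j₂ k₂ => ∑ j₁, ∑ j₃, v j₁ j₂ j₃ * w j₁ k₂ j₃

def contract₂₃ (v w : Fin d₁ → Fin d₂ → Fin d₃ → ℝ) : Matrix (Fin d₁) (Fin d₁) ℝ :=
  .of fun j₁ k₁ => ∑ j₂, ∑ j₃, v j₁ j₂ j₃ * w k₁ j₂ j₃

lemma mem_S₁_iff (v : Fin d₁ → Fin d₂ → Fin d₃ → ℝ) (u : Fin d₁ → ℝ) :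
    u ∈ S₁ v ↔ contract₁ v u = 0 := by
  rw [← Matrix.ext_iff]; rfl

lemma mem_S₂_iff (v : Fin d₁ → Fin d₂ → Fin d₃ → ℝ) (u : Fin d₂ → ℝ) :
    u ∈ S₂ v ↔ contract₂ v u = 0 := by
  rw [← Matrix.ext_iff]; rfl

lemma mem_S₃_iff (v : Fin d₁ → Fin d₂ → Fin d₃ → ℝ) (u : Fin d₃ → ℝ) :
    u ∈ S₃ v ↔ contract₃ v u = 0 := by
  rw [← Matrix.ext_iff]; rfl

lemma mem_S₄_iff (v w : Fin d₁ → Fin d₂ → Fin d₃ → ℝ) :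
    w ∈ S₄ v ↔ contract₁₂ v w = 0 ∧ contract₁₃ v w = 0 ∧ contract₂₃ v w = 0 := by
  simp only [← Matrix.ext_iff]; rfl

section Action

variable (A B C : Matrix (Fin 2) (Fin 2) ℝ)

lemma act_act (A' B' C' : Matrix (Fin 2) (Fin 2) ℝ) (v : Fin 2 → Fin 2 → Fin 2 → ℝ) :
    act A B C (act A' B' C' v) = act (A' * A) (B' * B) (C' * C) v := by
  ext i j k
  simp only [act, mul_apply, Fin.sum_univ_two]
  ring

lemma act_one (v : Fin 2 → Fin 2 → Fin 2 → ℝ) : act 1 1 1 v = v := by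
  ext i j k
  simp [act, one_apply]

variable {A B C} in
lemma act_bijective (hA : IsUnit A) (hB : IsUnit B) (hC : IsUnit C) :
    Function.Bijective (act A B C) := by
  rw [isUnit_iff_isUnit_det] at hA hB hC
  refine Function.bijective_iff_has_inverse.mpr ⟨act A⁻¹ B⁻¹ C⁻¹, fun v => ?_, fun v => ?_⟩
  · rw [act_act, mul_nonsing_inv _ hA, mul_nonsing_inv _ hB, mul_nonsing_inv _ hC, act_one]
  · rw [act_act, nonsing_inv_mul _ hA, nonsing_inv_mul _ hB, nonsing_inv_mul _ hC, act_one]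

def actLinearMap : (Fin 2 → Fin 2 → Fin 2 → ℝ) →ₗ[ℝ] (Fin 2 → Fin 2 → Fin 2 → ℝ) where
  toFun := act A B C
  map_add' v w := by ext; simp only [act, Pi.add_apply, add_mul, Finset.sum_add_distrib]
  map_smul' c v := by
    ext
    simp only [act, Pi.smul_apply, smul_eq_mul, mul_assoc, Finset.mul_sum, RingHom.id_apply]

lemma contract₁_act (v : Fin 2 → Fin 2 → Fin 2 → ℝ) (u : Fin 2 → ℝ) :
    contract₁ (act A B C v) u = Bᵀ * contract₁ v (A *ᵥ u) * C := by
  ext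
  simp only [contract₁, act, of_apply, mul_apply, transpose_apply, mulVec, dotProduct,
    Fin.sum_univ_two]
  ring

lemma contract₂_act (v : Fin 2 → Fin 2 → Fin 2 → ℝ) (u : Fin 2 → ℝ) :
    contract₂ (act A B C v) u = Aᵀ * contract₂ v (B *ᵥ u) * C := by
  ext
  simp only [contract₂, act, of_apply, mul_apply, transpose_apply, mulVec, dotProduct,
    Fin.sum_univ_two]
  ring

lemma contract₃_act (v : Fin 2 → Fin 2 → Fin 2 → ℝ) (u : Fin 2 → ℝ) :
    contract₃ (act A B C v) u = Aᵀ * contract₃ v (C *ᵥ u) * B := by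
  ext
  simp only [contract₃, act, of_apply, mul_apply, transpose_apply, mulVec, dotProduct,
    Fin.sum_univ_two]
  ring

lemma contract₁₂_act (v w : Fin 2 → Fin 2 → Fin 2 → ℝ) :
    contract₁₂ (act A B C v) w * Cᵀ = Cᵀ * contract₁₂ v (act Aᵀ Bᵀ Cᵀ w) := by
  ext
  simp only [contract₁₂, act, of_apply, mul_apply, transpose_apply, Fin.sum_univ_two]
  ring

lemma contract₁₃_act (v w : Fin 2 → Fin 2 → Fin 2 → ℝ) :
    contract₁₃ (act A B C v) w * Bᵀ = Bᵀ * contract₁₃ v (act Aᵀ Bᵀ Cᵀ w) := by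
  ext
  simp only [contract₁₃, act, of_apply, mul_apply, transpose_apply, Fin.sum_univ_two]
  ring

lemma contract₂₃_act (v w : Fin 2 → Fin 2 → Fin 2 → ℝ) :
    contract₂₃ (act A B C v) w * Aᵀ = Aᵀ * contract₂₃ v (act Aᵀ Bᵀ Cᵀ w) := by
  ext
  simp only [contract₂₃, act, of_apply, mul_apply, transpose_apply, Fin.sum_univ_two]
  ring

variable {A B C}

lemma S₁_act (hB : IsUnit B) (hC : IsUnit C) (v : Fin 2 → Fin 2 → Fin 2 → ℝ) :
    S₁ (act A B C v) = (S₁ v).comap A.mulVecLin := by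
  ext u
  rw [Submodule.mem_comap, mem_S₁_iff, mem_S₁_iff, contract₁_act, hC.mul_left_eq_zero,
    (B.isUnit_transpose.mpr hB).mul_right_eq_zero, mulVecLin_apply]

lemma S₂_act (hA : IsUnit A) (hC : IsUnit C) (v : Fin 2 → Fin 2 → Fin 2 → ℝ) :
    S₂ (act A B C v) = (S₂ v).comap B.mulVecLin := by
  ext u
  rw [Submodule.mem_comap, mem_S₂_iff, mem_S₂_iff, contract₂_act, hC.mul_left_eq_zero,
    (A.isUnit_transpose.mpr hA).mul_right_eq_zero, mulVecLin_apply]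

lemma S₃_act (hA : IsUnit A) (hB : IsUnit B) (v : Fin 2 → Fin 2 → Fin 2 → ℝ) :
    S₃ (act A B C v) = (S₃ v).comap C.mulVecLin := by
  ext u
  rw [Submodule.mem_comap, mem_S₃_iff, mem_S₃_iff, contract₃_act, hB.mul_left_eq_zero,
    (A.isUnit_transpose.mpr hA).mul_right_eq_zero, mulVecLin_apply]

lemma S₄_act (hA : IsUnit A) (hB : IsUnit B) (hC : IsUnit C) (v : Fin 2 → Fin 2 → Fin 2 → ℝ) :
    S₄ (act A B C v) = (S₄ v).comap (actLinearMap Aᵀ Bᵀ Cᵀ) := by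
  have hA' := A.isUnit_transpose.mpr hA
  have hB' := B.isUnit_transpose.mpr hB
  have hC' := C.isUnit_transpose.mpr hC
  ext w
  rw [Submodule.mem_comap, mem_S₄_iff, mem_S₄_iff]
  exact and_congr (hC'.eq_zero_iff_of_mul_eq_mul hC' (contract₁₂_act A B C v w)) <|
    and_congr (hB'.eq_zero_iff_of_mul_eq_mul hB' (contract₁₃_act A B C v w))
      (hA'.eq_zero_iff_of_mul_eq_mul hA' (contract₂₃_act A B C v w))

lemma n₁_act (hA : IsUnit A) (hB : IsUnit B) (hC : IsUnit C) (v : Fin 2 → Fin 2 → Fin 2 → ℝ) :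
    n₁ (act A B C v) = n₁ v := by
  rw [n₁, n₁, S₁_act hB hC, Submodule.finrank_comap_of_bijective (mulVecLin_bijective hA)]

lemma n₂_act (hA : IsUnit A) (hB : IsUnit B) (hC : IsUnit C) (v : Fin 2 → Fin 2 → Fin 2 → ℝ) :
    n₂ (act A B C v) = n₂ v := by
  rw [n₂, n₂, S₂_act hA hC, Submodule.finrank_comap_of_bijective (mulVecLin_bijective hB)]

lemma n₃_act (hA : IsUnit A) (hB : IsUnit B) (hC : IsUnit C) (v : Fin 2 → Fin 2 → Fin 2 → ℝ) :
    n₃ (act A B C v) = n₃ v := by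
  rw [n₃, n₃, S₃_act hA hB, Submodule.finrank_comap_of_bijective (mulVecLin_bijective hC)]

lemma n₄_act (hA : IsUnit A) (hB : IsUnit B) (hC : IsUnit C) (v : Fin 2 → Fin 2 → Fin 2 → ℝ) :
    n₄ (act A B C v) = n₄ v := by
  rw [n₄, n₄, S₄_act hA hB hC, Submodule.finrank_comap_of_bijective <|
    act_bijective (A.isUnit_transpose.mpr hA) (B.isUnit_transpose.mpr hB)
      (C.isUnit_transpose.mpr hC)]

end Action

/-- **Invariance of the three-qubit algebraic invariants.**
For every three-qubit array `v` and invertible `2×2` real matrices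
`g₁, g₂, g₃`, the invariant tuple `N(v) = (n₁, n₂, n₃, ñ₄)` is unchanged
under the action. -/
theorem three_qubit_invariants_are_invariant
    (v : Fin 2 → Fin 2 → Fin 2 → ℝ)
    (g₁ g₂ g₃ : Matrix.GeneralLinearGroup (Fin 2) ℝ) :
    n₁ (act (g₁ : Matrix (Fin 2) (Fin 2) ℝ) (g₂ : Matrix (Fin 2) (Fin 2) ℝ)
          (g₃ : Matrix (Fin 2) (Fin 2) ℝ) v) = n₁ v ∧
    n₂ (act (g₁ : Matrix (Fin 2) (Fin 2) ℝ) (g₂ : Matrix (Fin 2) (Fin 2) ℝ)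
          (g₃ : Matrix (Fin 2) (Fin 2) ℝ) v) = n₂ v ∧
    n₃ (act (g₁ : Matrix (Fin 2) (Fin 2) ℝ) (g₂ : Matrix (Fin 2) (Fin 2) ℝ)
          (g₃ : Matrix (Fin 2) (Fin 2) ℝ) v) = n₃ v ∧
    n₄ (act (g₁ : Matrix (Fin 2) (Fin 2) ℝ) (g₂ : Matrix (Fin 2) (Fin 2) ℝ)
          (g₃ : Matrix (Fin 2) (Fin 2) ℝ) v) = n₄ v := by
  have h₁ := g₁.isUnit
  have h₂ := g₂.isUnit
  have h₃ := g₃.isUnit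
  exact ⟨n₁_act h₁ h₂ h₃ v, n₂_act h₁ h₂ h₃ v, n₃_act h₁ h₂ h₃ v, n₄_act h₁ h₂ h₃ v⟩
end

section
/- The seven representative three-qubit arrays realize the seven invariant tuples: N(0) = (2,2,2,8); N([1,1,1]) = (1,1,1,4); N([1,1,1]+[2,2,1]) = (0,0,1,3); N([1,1,1]+[2,1,2]) = (0,1,0,3); N([1,1,1]+[1,2,2]) = (1,0,0,3); N([1,1,1]+[1,2,2]+[2,1,2]) = (0,0,0,1); and N([1,1,1]+[2,2,2]) = (0,0,0,0). -/
variable {d₁ d₂ d₃ : ℕ}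

/-- The basis array `[a,b,c]`: equal to `1` at index `(a,b,c)` and `0`
elsewhere.  The paper's indices `1, 2` correspond to `0, 1 : Fin 2`. -/
def e (a b c : Fin 2) : Fin 2 → Fin 2 → Fin 2 → ℝ :=
  fun i j k => if i = a ∧ j = b ∧ k = c then 1 else 0

/-!
Transposing two tensor factors of `v` permutes `n₁, n₂, n₃` accordingly and leaves `ñ₄`
unchanged, because it carries the three contraction conditions defining `S₄` onto one another.
This reduces the three biseparable representatives to one of them, and every `n₂, n₃` to an `n₁`.
When the first factor is a qubit, `S₁ v = 0` as soon as the flattening `j₁ ↦ v j₁ · ·` has a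
nonzero `2 × 2` minor, and `S₁ v` is a line when `v` is supported on the slice `j₁ = 0`. Each
`S₄ v` is computed by exhibiting a family in it with dual coordinate functionals in terms of
which every solution expands.
-/

open Submodule Module

noncomputable def N (v : Fin d₁ → Fin d₂ → Fin d₃ → ℝ) : ℕ × ℕ × ℕ × ℕ := (n₁ v, n₂ v, n₃ v, n₄ v)

theorem mem_S₄ {v w : Fin d₁ → Fin d₂ → Fin d₃ → ℝ} :
    w ∈ S₄ v ↔
      (∀ j₃ k₃, ∑ j₁, ∑ j₂, v j₁ j₂ j₃ * w j₁ j₂ k₃ = 0) ∧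
      (∀ j₂ k₂, ∑ j₁, ∑ j₃, v j₁ j₂ j₃ * w j₁ k₂ j₃ = 0) ∧
      (∀ j₁ k₁, ∑ j₂, ∑ j₃, v j₁ j₂ j₃ * w k₁ j₂ j₃ = 0) :=
  Iff.rfl

theorem N_zero : N (0 : Fin d₁ → Fin d₂ → Fin d₃ → ℝ) = (d₁, d₂, d₃, d₁ * d₂ * d₃) := by
  have h₁ : S₁ (0 : Fin d₁ → Fin d₂ → Fin d₃ → ℝ) = ⊤ := eq_top_iff.2 fun _ _ _ _ => by simp
  have h₂ : S₂ (0 : Fin d₁ → Fin d₂ → Fin d₃ → ℝ) = ⊤ := eq_top_iff.2 fun _ _ _ _ => by simp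
  have h₃ : S₃ (0 : Fin d₁ → Fin d₂ → Fin d₃ → ℝ) = ⊤ := eq_top_iff.2 fun _ _ _ _ => by simp
  have h₄ : S₄ (0 : Fin d₁ → Fin d₂ → Fin d₃ → ℝ) = ⊤ := eq_top_iff.2 fun _ _ => by simp [mem_S₄]
  rw [N, n₁, n₂, n₃, n₄, h₁, h₂, h₃, h₄]
  simp [finrank_pi_fintype, mul_assoc]

def swap₁₂ : (Fin d₁ → Fin d₂ → Fin d₃ → ℝ) ≃ₗ[ℝ] (Fin d₂ → Fin d₁ → Fin d₃ → ℝ) where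
  toFun v a b c := v b a c
  invFun v a b c := v b a c
  map_add' _ _ := rfl
  map_smul' _ _ := rfl
  left_inv _ := rfl
  right_inv _ := rfl

def swap₂₃ : (Fin d₁ → Fin d₂ → Fin d₃ → ℝ) ≃ₗ[ℝ] (Fin d₁ → Fin d₃ → Fin d₂ → ℝ) where
  toFun v a b c := v a c b
  invFun v a b c := v a c b
  map_add' _ _ := rfl
  map_smul' _ _ := rfl
  left_inv _ := rfl
  right_inv _ := rfl

section Transposition

variable (v : Fin d₁ → Fin d₂ → Fin d₃ → ℝ)

@[simp] theorem swap₁₂_apply (a b c) : swap₁₂ v a b c = v b a c := rfl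

@[simp] theorem swap₂₃_apply (a b c) : swap₂₃ v a b c = v a c b := rfl

theorem S₄_swap₁₂ : S₄ (swap₁₂ v) = (S₄ v).map swap₁₂.toLinearMap := by
  ext w
  rw [map_equiv_eq_comap_symm, mem_comap, mem_S₄, mem_S₄]
  refine and_congr (forall₂_congr fun _ _ => ?_) and_comm
  rw [Finset.sum_comm]
  rfl

theorem S₄_swap₂₃ : S₄ (swap₂₃ v) = (S₄ v).map swap₂₃.toLinearMap := by
  ext w
  rw [map_equiv_eq_comap_symm, mem_comap, mem_S₄, mem_S₄]
  refine and_left_comm.trans (and_congr Iff.rfl (and_congr Iff.rfl (forall₂_congr fun _ _ => ?_)))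
  rw [Finset.sum_comm]
  rfl

theorem n₁_swap₁₂ : n₁ (swap₁₂ v) = n₂ v := rfl

theorem n₂_swap₁₂ : n₂ (swap₁₂ v) = n₁ v := rfl

theorem S₃_swap₁₂ : S₃ (swap₁₂ v) = S₃ v := by
  ext
  exact forall_comm

theorem n₃_swap₁₂ : n₃ (swap₁₂ v) = n₃ v := by
  rw [n₃, n₃, S₃_swap₁₂]

theorem n₄_swap₁₂ : n₄ (swap₁₂ v) = n₄ v := by
  rw [n₄, n₄, S₄_swap₁₂, LinearEquiv.finrank_map_eq]

theorem S₁_swap₂₃ : S₁ (swap₂₃ v) = S₁ v := by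
  ext
  exact forall_comm

theorem n₁_swap₂₃ : n₁ (swap₂₃ v) = n₁ v := by
  rw [n₁, n₁, S₁_swap₂₃]

theorem n₂_swap₂₃ : n₂ (swap₂₃ v) = n₃ v := rfl

theorem n₃_swap₂₃ : n₃ (swap₂₃ v) = n₂ v := rfl

theorem n₄_swap₂₃ : n₄ (swap₂₃ v) = n₄ v := by
  rw [n₄, n₄, S₄_swap₂₃, LinearEquiv.finrank_map_eq]

theorem N_swap₁₂ : N (swap₁₂ v) = (n₂ v, n₁ v, n₃ v, n₄ v) := by
  rw [N, n₁_swap₁₂, n₂_swap₁₂, n₃_swap₁₂, n₄_swap₁₂]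

theorem N_swap₂₃ : N (swap₂₃ v) = (n₁ v, n₃ v, n₂ v, n₄ v) := by
  rw [N, n₁_swap₂₃, n₂_swap₂₃, n₃_swap₂₃, n₄_swap₂₃]

end Transposition

theorem n₁_eq_zero_of_det_ne_zero {v : Fin 2 → Fin d₂ → Fin d₃ → ℝ} (p q : Fin d₂ × Fin d₃)
    (h : v 0 p.1 p.2 * v 1 q.1 q.2 - v 1 p.1 p.2 * v 0 q.1 q.2 ≠ 0) : n₁ v = 0 := by
  suffices S₁ v = ⊥ by rw [n₁, this, finrank_bot]
  refine eq_bot_iff.2 fun w hw => ?_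
  have hp := hw p.1 p.2
  have hq := hw q.1 q.2
  simp only [Fin.sum_univ_two] at hp hq
  have h₀ : (v 0 p.1 p.2 * v 1 q.1 q.2 - v 1 p.1 p.2 * v 0 q.1 q.2) * w 0 = 0 := by
    linear_combination v 1 q.1 q.2 * hp - v 1 p.1 p.2 * hq
  have h₁ : (v 0 p.1 p.2 * v 1 q.1 q.2 - v 1 p.1 p.2 * v 0 q.1 q.2) * w 1 = 0 := by
    linear_combination v 0 p.1 p.2 * hq - v 0 q.1 q.2 * hp
  ext i
  fin_cases i
  · exact (mul_eq_zero.1 h₀).resolve_left h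
  · exact (mul_eq_zero.1 h₁).resolve_left h

theorem n₁_eq_one_of_slice_eq_zero {v : Fin 2 → Fin d₂ → Fin d₃ → ℝ} (h₁ : v 1 = 0)
    (p : Fin d₂ × Fin d₃) (h₀ : v 0 p.1 p.2 ≠ 0) : n₁ v = 1 := by
  suffices S₁ v = span ℝ {Pi.single 1 1} by
    rw [n₁, this, finrank_span_singleton (by simp)]
  ext w
  have hS : w ∈ S₁ v ↔ w 0 = 0 := by
    refine ⟨fun hw => ?_, fun hw j₂ j₃ => by simp [Fin.sum_univ_two, h₁, hw]⟩
    simpa [Fin.sum_univ_two, h₁, h₀] using hw p.1 p.2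
  rw [hS, mem_span_singleton]
  refine ⟨fun hw => ⟨w 1, ?_⟩, fun ⟨a, ha⟩ => by simp [← ha]⟩
  ext i
  fin_cases i <;> simp [hw]

theorem finrank_eq_of_biorthogonal {V : Type*} [AddCommGroup V] [Module ℝ V] {S : Submodule ℝ V}
    {k : ℕ} (b : Fin k → V) (f : Fin k → Dual ℝ V) (hb : ∀ i, b i ∈ S)
    (hf : ∀ i j, f i (b j) = if i = j then 1 else 0) (hS : ∀ w ∈ S, w = ∑ i, f i w • b i) :
    finrank ℝ S = k := by
  have hspan : S = span ℝ (Set.range b) := by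
    refine le_antisymm (fun w hw => ?_) (span_le.2 (Set.range_subset_iff.2 hb))
    rw [hS w hw]
    exact sum_mem fun i _ => smul_mem _ _ (subset_span (Set.mem_range_self i))
  have hind : LinearIndependent ℝ b :=
    .of_pairwise_dual_eq_zero_one b f (fun i j hij => by simp [hf, hij]) (fun i => by simp [hf])
  rw [hspan, finrank_span_eq_card hind, Fintype.card_fin]

def coord (a : Fin d₁) (b : Fin d₂) (c : Fin d₃) : Dual ℝ (Fin d₁ → Fin d₂ → Fin d₃ → ℝ) :=
  LinearMap.proj c ∘ₗ LinearMap.proj b ∘ₗ LinearMap.proj a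

@[simp] theorem coord_apply (a : Fin d₁) (b : Fin d₂) (c : Fin d₃)
    (w : Fin d₁ → Fin d₂ → Fin d₃ → ℝ) : coord a b c w = w a b c := rfl

theorem swap₁₂_e (a b c : Fin 2) : swap₁₂ (e a b c) = e b a c := by
  ext i j k
  simp only [swap₁₂_apply, e, and_left_comm]

theorem swap₂₃_e (a b c : Fin 2) : swap₂₃ (e a b c) = e a c b := by
  ext i j k
  simp only [swap₂₃_apply, e, and_comm]

theorem n₄_e000 : n₄ (e 0 0 0) = 4 :=
  finrank_eq_of_biorthogonal ![e 0 1 1, e 1 0 1, e 1 1 0, e 1 1 1]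
    ![coord 0 1 1, coord 1 0 1, coord 1 1 0, coord 1 1 1]
    (fun i => by fin_cases i <;> simp [mem_S₄, Fin.sum_univ_two, e])
    (fun i j => by fin_cases i <;> fin_cases j <;> simp [e])
    (fun w hw => by
      simp [mem_S₄, Fin.forall_fin_two, Fin.sum_univ_two, e] at hw
      ext i j k
      fin_cases i <;> fin_cases j <;> fin_cases k <;> simp [Fin.sum_univ_succ, e] <;> linarith)

theorem n₄_e000_add_e110 : n₄ (e 0 0 0 + e 1 1 0) = 3 :=
  finrank_eq_of_biorthogonal ![e 0 1 1, e 1 0 1, e 1 1 1 - e 0 0 1]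
    ![coord 0 1 1, coord 1 0 1, coord 1 1 1]
    (fun i => by fin_cases i <;> simp [mem_S₄, Fin.sum_univ_two, e])
    (fun i j => by fin_cases i <;> fin_cases j <;> simp [e])
    (fun w hw => by
      simp [mem_S₄, Fin.forall_fin_two, Fin.sum_univ_two, e] at hw
      ext i j k
      fin_cases i <;> fin_cases j <;> fin_cases k <;> simp [Fin.sum_univ_succ, e] <;> linarith)

theorem n₄_e000_add_e011_add_e101 : n₄ (e 0 0 0 + e 0 1 1 + e 1 0 1) = 1 :=
  finrank_eq_of_biorthogonal ![e 1 1 0] ![coord 1 1 0]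
    (fun i => by fin_cases i; simp [mem_S₄, Fin.sum_univ_two, e])
    (fun i j => by fin_cases i; fin_cases j; simp [e])
    (fun w hw => by
      simp [mem_S₄, Fin.forall_fin_two, Fin.sum_univ_two, e] at hw
      ext i j k
      fin_cases i <;> fin_cases j <;> fin_cases k <;> simp [e] <;> linarith)

theorem n₄_e000_add_e111 : n₄ (e 0 0 0 + e 1 1 1) = 0 :=
  finrank_eq_of_biorthogonal ![] ![] (fun i => i.elim0) (fun i => i.elim0)
    (fun w hw => by
      simp [mem_S₄, Fin.forall_fin_two, Fin.sum_univ_two, e] at hw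
      ext i j k
      fin_cases i <;> fin_cases j <;> fin_cases k <;> simp <;> linarith)

theorem N_e000 : N (e 0 0 0) = (1, 1, 1, 4) := by
  have h₁ : n₁ (e 0 0 0) = 1 := n₁_eq_one_of_slice_eq_zero (by ext; simp [e]) (0, 0) (by simp [e])
  have h₂ : n₂ (e 0 0 0) = 1 := by rw [← n₁_swap₁₂, swap₁₂_e, h₁]
  have h₃ : n₃ (e 0 0 0) = 1 := by rw [← n₂_swap₂₃, swap₂₃_e, h₂]
  rw [N, h₁, h₂, h₃, n₄_e000]

theorem N_e000_add_e110 : N (e 0 0 0 + e 1 1 0) = (0, 0, 1, 3) := by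
  have h₁ : n₁ (e 0 0 0 + e 1 1 0) = 0 := n₁_eq_zero_of_det_ne_zero (0, 0) (1, 0) (by simp [e])
  have h₂ : n₂ (e 0 0 0 + e 1 1 0) = 0 := by rw [← n₁_swap₁₂, map_add, swap₁₂_e, swap₁₂_e, h₁]
  have h₃ : n₃ (e 0 0 0 + e 1 1 0) = 1 := by
    rw [← n₂_swap₂₃, ← n₁_swap₁₂, map_add, map_add, swap₂₃_e, swap₂₃_e, swap₁₂_e, swap₁₂_e]
    exact n₁_eq_one_of_slice_eq_zero (by ext; simp [e]) (0, 0) (by simp [e])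
  rw [N, h₁, h₂, h₃, n₄_e000_add_e110]

theorem N_e000_add_e101 : N (e 0 0 0 + e 1 0 1) = (0, 1, 0, 3) := by
  have h : e 0 0 0 + e 1 0 1 = swap₂₃ (e 0 0 0 + e 1 1 0) := by rw [map_add, swap₂₃_e, swap₂₃_e]
  have h₃ := N_e000_add_e110
  simp only [N, Prod.mk.injEq] at h₃
  rw [h, N_swap₂₃]
  simp [h₃]

theorem N_e000_add_e011 : N (e 0 0 0 + e 0 1 1) = (1, 0, 0, 3) := by
  have h : e 0 0 0 + e 0 1 1 = swap₁₂ (e 0 0 0 + e 1 0 1) := by rw [map_add, swap₁₂_e, swap₁₂_e]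
  have h₄ := N_e000_add_e101
  simp only [N, Prod.mk.injEq] at h₄
  rw [h, N_swap₁₂]
  simp [h₄]

theorem N_e000_add_e011_add_e101 : N (e 0 0 0 + e 0 1 1 + e 1 0 1) = (0, 0, 0, 1) := by
  have h₁ : n₁ (e 0 0 0 + e 0 1 1 + e 1 0 1) = 0 :=
    n₁_eq_zero_of_det_ne_zero (0, 0) (0, 1) (by simp [e])
  have h₂ : n₂ (e 0 0 0 + e 0 1 1 + e 1 0 1) = 0 := by
    rw [← n₁_swap₁₂, map_add, map_add, swap₁₂_e, swap₁₂_e, swap₁₂_e, add_right_comm, h₁]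
  have h₃ : n₃ (e 0 0 0 + e 0 1 1 + e 1 0 1) = 0 := by
    rw [← n₂_swap₂₃, ← n₁_swap₁₂]
    simp only [map_add, swap₂₃_e, swap₁₂_e]
    exact n₁_eq_zero_of_det_ne_zero (0, 0) (1, 0) (by simp [e])
  rw [N, h₁, h₂, h₃, n₄_e000_add_e011_add_e101]

theorem N_e000_add_e111 : N (e 0 0 0 + e 1 1 1) = (0, 0, 0, 0) := by
  have h₁ : n₁ (e 0 0 0 + e 1 1 1) = 0 := n₁_eq_zero_of_det_ne_zero (0, 0) (1, 1) (by simp [e])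
  have h₂ : n₂ (e 0 0 0 + e 1 1 1) = 0 := by rw [← n₁_swap₁₂, map_add, swap₁₂_e, swap₁₂_e, h₁]
  have h₃ : n₃ (e 0 0 0 + e 1 1 1) = 0 := by rw [← n₂_swap₂₃, map_add, swap₂₃_e, swap₂₃_e, h₂]
  rw [N, h₁, h₂, h₃, n₄_e000_add_e111]

/-- **Values of the invariants on the seven representative three-qubit states.**
`N(0) = (2,2,2,8)`, `N([1,1,1]) = (1,1,1,4)`, `N([1,1,1]+[2,2,1]) = (0,0,1,3)`,
`N([1,1,1]+[2,1,2]) = (0,1,0,3)`, `N([1,1,1]+[1,2,2]) = (1,0,0,3)`,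
`N([1,1,1]+[1,2,2]+[2,1,2]) = (0,0,0,1)`, `N([1,1,1]+[2,2,2]) = (0,0,0,0)`. -/
theorem three_qubit_representatives :
    (n₁ (0 : Fin 2 → Fin 2 → Fin 2 → ℝ), n₂ (0 : Fin 2 → Fin 2 → Fin 2 → ℝ),
      n₃ (0 : Fin 2 → Fin 2 → Fin 2 → ℝ), n₄ (0 : Fin 2 → Fin 2 → Fin 2 → ℝ))
        = (2, 2, 2, 8) ∧
    (n₁ (e 0 0 0), n₂ (e 0 0 0), n₃ (e 0 0 0), n₄ (e 0 0 0)) = (1, 1, 1, 4) ∧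
    (n₁ (e 0 0 0 + e 1 1 0), n₂ (e 0 0 0 + e 1 1 0),
      n₃ (e 0 0 0 + e 1 1 0), n₄ (e 0 0 0 + e 1 1 0)) = (0, 0, 1, 3) ∧
    (n₁ (e 0 0 0 + e 1 0 1), n₂ (e 0 0 0 + e 1 0 1),
      n₃ (e 0 0 0 + e 1 0 1), n₄ (e 0 0 0 + e 1 0 1)) = (0, 1, 0, 3) ∧
    (n₁ (e 0 0 0 + e 0 1 1), n₂ (e 0 0 0 + e 0 1 1),
      n₃ (e 0 0 0 + e 0 1 1), n₄ (e 0 0 0 + e 0 1 1)) = (1, 0, 0, 3) ∧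
    (n₁ (e 0 0 0 + e 0 1 1 + e 1 0 1), n₂ (e 0 0 0 + e 0 1 1 + e 1 0 1),
      n₃ (e 0 0 0 + e 0 1 1 + e 1 0 1), n₄ (e 0 0 0 + e 0 1 1 + e 1 0 1))
        = (0, 0, 0, 1) ∧
    (n₁ (e 0 0 0 + e 1 1 1), n₂ (e 0 0 0 + e 1 1 1),
      n₃ (e 0 0 0 + e 1 1 1), n₄ (e 0 0 0 + e 1 1 1)) = (0, 0, 0, 0) := by
  refine ⟨N_zero, N_e000, N_e000_add_e110, N_e000_add_e101, N_e000_add_e011,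
    N_e000_add_e011_add_e101, N_e000_add_e111⟩
end
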